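/- arXiv:quant-ph/0504078 — 2 statements merged into one kernel-verified Lean document; each statement's English description precedes it below -/
import Mathlib

section
/- For an ensemble of quantum states {p_x, ρ_x} indexed by strings x ∈ {0,1}^n, with ρ = Σ_x p_x ρ_x and ρ_AB = Σ_x p_x |x⟩⟨x| ⊗ ρ_x, the maximal average success probability of guessing x from ρ_x over all POVMs is at least 2^{-H₂(ρ_AB|ρ)}, where H₂(ρ_AB|ρ) = -log₂ Tr(((I ⊗ ρ^{-1/2}) ρ_AB)²). Equivalently, the square-root (pretty-good) measurement with operators M_x = p_x ρ^{-1/2} ρ_x ρ^{-1/2} satisfies Σ_x p_x Tr(M_x ρ_x) = Tr(((I ⊗ ρ^{-1/2})ρ_AB)²). -/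
/-!
The square-root measurement `M_x = p_x R ρ_x R` with `R = ρ^{-1/2}` is a POVM because
`R ρ R = 1`. Since `ρ_AB` is block diagonal with blocks `p_x ρ_x`, so is `Q`, with blocks
`p_x R ρ_x`; hence `Tr(Q²) = Σ_x p_x² Tr(R ρ_x R ρ_x)`, which is exactly the success probability
`Σ_x p_x Tr(M_x ρ_x)`. Each summand is positive, so `2^{-H₂} = Tr(Q²)`.
-/

open Matrix
open scoped Kronecker ComplexOrder

/-- The trace norm ‖A‖₁ of a matrix: the sum of its singular values,
i.e. of the square roots of the eigenvalues of AᴴA. -/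
noncomputable def traceNorm {n : Type*} [Fintype n] [DecidableEq n]
    (A : Matrix n n ℂ) : ℝ :=
  ∑ i, Real.sqrt ((Matrix.posSemidef_conjTranspose_mul_self A).isHermitian.eigenvalues i)

/-- The square root of a positive semidefinite matrix, as defined in Mathlib (Dec 2024)
under the name `Matrix.PosSemidef.sqrt` (since removed from Mathlib). -/
noncomputable def Matrix.PosSemidef.sqrt {n 𝕜 : Type*} [Fintype n] [RCLike 𝕜] [DecidableEq n]
    {A : Matrix n n 𝕜} (hA : A.PosSemidef) : Matrix n n 𝕜 :=
  (hA.1.eigenvectorUnitary : Matrix n n 𝕜) * diagonal ((↑) ∘ Real.sqrt ∘ hA.1.eigenvalues) *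
    star (hA.1.eigenvectorUnitary : Matrix n n 𝕜)

/-- The trace distance δ(A,B) = ‖A - B‖₁ / 2. -/
noncomputable def traceDist {n : Type*} [Fintype n] [DecidableEq n]
    (A B : Matrix n n ℂ) : ℝ := traceNorm (A - B) / 2

namespace Matrix

section Sqrt

variable {n 𝕜 : Type*} [Fintype n] [RCLike 𝕜] [DecidableEq n] {A : Matrix n n 𝕜}

lemma PosSemidef.sqrt_mul_self (hA : A.PosSemidef) : hA.sqrt * hA.sqrt = A := by
  set U : Matrix n n 𝕜 := (hA.1.eigenvectorUnitary : Matrix n n 𝕜)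
  have hU : star U * U = 1 := Unitary.coe_star_mul_self _
  have hD : diagonal (((↑) ∘ Real.sqrt ∘ hA.1.eigenvalues) : n → 𝕜) *
      diagonal ((↑) ∘ Real.sqrt ∘ hA.1.eigenvalues) = diagonal ((↑) ∘ hA.1.eigenvalues) := by
    rw [diagonal_mul_diagonal]
    congr 1 with i
    simp only [Function.comp_apply, ← RCLike.ofReal_mul,
      Real.mul_self_sqrt (hA.eigenvalues_nonneg i)]
  conv_rhs => rw [hA.1.spectral_theorem, Unitary.conjStarAlgAut_apply]
  calc hA.sqrt * hA.sqrt
      = U * diagonal ((↑) ∘ Real.sqrt ∘ hA.1.eigenvalues) * (star U * U) *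
          diagonal ((↑) ∘ Real.sqrt ∘ hA.1.eigenvalues) * star U := by
        simp only [PosSemidef.sqrt, U, Matrix.mul_assoc]
    _ = _ := by rw [hU, Matrix.mul_one, Matrix.mul_assoc _ (diagonal _) (diagonal _), hD]

lemma PosSemidef.posSemidef_sqrt (hA : A.PosSemidef) : hA.sqrt.PosSemidef := by
  rw [PosSemidef.sqrt, star_eq_conjTranspose]
  refine PosSemidef.mul_mul_conjTranspose_same (PosSemidef.diagonal fun i => ?_) _
  exact RCLike.ofReal_nonneg.mpr (Real.sqrt_nonneg _)

lemma PosDef.sqrt_inv_mul_mul_sqrt_inv (hA : A.PosDef) :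
    hA.inv.posSemidef.sqrt * A * hA.inv.posSemidef.sqrt = 1 :=
  mul_eq_one_symm <| by
    rw [← Matrix.mul_assoc, hA.inv.posSemidef.sqrt_mul_self,
      nonsing_inv_mul _ ((isUnit_iff_isUnit_det A).mp hA.isUnit)]

lemma PosDef.posDef_sqrt_inv (hA : A.PosDef) : hA.inv.posSemidef.sqrt.PosDef :=
  hA.inv.posSemidef.posSemidef_sqrt.posDef_iff_isUnit.mpr <| isUnit_iff_exists_inv.mpr
    ⟨A * hA.inv.posSemidef.sqrt, by rw [← Matrix.mul_assoc, hA.sqrt_inv_mul_mul_sqrt_inv]⟩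

end Sqrt

open scoped MatrixOrder in
/-- Writing `R = y⋆ y`, the trace is `‖y A y⋆‖²` in the Frobenius norm. -/
lemma PosDef.trace_mul_mul_mul_pos {n 𝕜 : Type*} [Fintype n] [RCLike 𝕜] [DecidableEq n]
    {R A : Matrix n n 𝕜} (hR : R.PosDef) (hA : A.IsHermitian) (hA0 : A ≠ 0) :
    0 < (R * A * R * A).trace := by
  obtain ⟨y, hy, rfl⟩ :=
    CStarAlgebra.isStrictlyPositive_iff_eq_star_mul_self.mp hR.isStrictlyPositive
  set C := y * A * yᴴ
  have hC : (star y * y * A * (star y * y) * A).trace = (Cᴴ * C).trace := by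
    have hCh : Cᴴ = C := by
      simp only [C, conjTranspose_mul, conjTranspose_conjTranspose, hA.eq, Matrix.mul_assoc]
    calc (star y * y * A * (star y * y) * A).trace
        = (yᴴ * (y * A * yᴴ * y * A)).trace := by
          simp only [star_eq_conjTranspose, Matrix.mul_assoc]
      _ = (y * A * yᴴ * y * A * yᴴ).trace := trace_mul_comm _ _
      _ = (Cᴴ * C).trace := by rw [hCh]; simp only [C, Matrix.mul_assoc]
  have hC0 : C ≠ 0 := by
    have hy' : IsUnit yᴴ := by rw [← star_eq_conjTranspose]; exact hy.star
    simpa only [C, hy.mul_right_eq_zero, hy'.mul_left_eq_zero, ne_eq] using hA0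
  rw [hC]
  exact (posSemidef_conjTranspose_mul_self C).trace_nonneg.lt_of_ne
    (Ne.symm (trace_conjTranspose_mul_self_eq_zero_iff.not.mpr hC0))

end Matrix

section ClassicalQuantum

variable {ι m α : Type*} [Fintype ι] [DecidableEq ι] [Fintype m] [CommSemiring α]

def classicalQuantum (A : ι → Matrix m m α) : Matrix (ι × m) (ι × m) α :=
  ∑ x, single x x 1 ⊗ₖ A x

lemma one_kronecker_mul_classicalQuantum (R : Matrix m m α) (A : ι → Matrix m m α) :
    ((1 : Matrix ι ι α) ⊗ₖ R) * classicalQuantum A = classicalQuantum fun x => R * A x := by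
  simp only [classicalQuantum, Matrix.mul_sum, ← mul_kronecker_mul, Matrix.one_mul]

lemma classicalQuantum_mul_classicalQuantum (A B : ι → Matrix m m α) :
    classicalQuantum A * classicalQuantum B = classicalQuantum fun x => A x * B x := by
  simp only [classicalQuantum, Matrix.sum_mul, Matrix.mul_sum, ← mul_kronecker_mul]
  refine Finset.sum_congr rfl fun x _ => ?_
  rw [Finset.sum_eq_single x (fun y _ hyx => by
    rw [single_mul_single_of_ne _ _ _ _ hyx, zero_kronecker]) (by simp),
    single_mul_single_same, one_mul]

lemma trace_classicalQuantum (A : ι → Matrix m m α) :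
    (classicalQuantum A).trace = ∑ x, (A x).trace := by
  simp only [classicalQuantum, trace_sum, trace_kronecker, trace_single_eq_same, one_mul]

end ClassicalQuantum

section PrettyGoodMeasurement

variable {ι n : Type*} [Fintype n]

/-- The square-root measurement, with `R` standing for `ρ^{-1/2}`. -/
def prettyGoodMeasurement (p : ι → ℝ) (ρx : ι → Matrix n n ℂ) (R : Matrix n n ℂ) (x : ι) :
    Matrix n n ℂ :=
  (p x : ℂ) • (R * ρx x * R)

lemma posSemidef_prettyGoodMeasurement {p : ι → ℝ} {ρx : ι → Matrix n n ℂ} {R : Matrix n n ℂ}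
    (hp : ∀ x, 0 ≤ p x) (hρx : ∀ x, (ρx x).PosSemidef) (hR : R.IsHermitian) (x : ι) :
    (prettyGoodMeasurement p ρx R x).PosSemidef := by
  have h := (hρx x).conjTranspose_mul_mul_same R
  rw [hR.eq] at h
  exact h.smul (Complex.zero_le_real.mpr (hp x))

variable [Fintype ι]

lemma sum_prettyGoodMeasurement (p : ι → ℝ) (ρx : ι → Matrix n n ℂ) (R : Matrix n n ℂ) :
    ∑ x, prettyGoodMeasurement p ρx R x = R * (∑ x, (p x : ℂ) • ρx x) * R := by
  simp only [prettyGoodMeasurement, Matrix.mul_sum, Matrix.sum_mul, Matrix.mul_smul,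
    Matrix.smul_mul]

lemma sum_mul_re_trace_prettyGoodMeasurement_mul (p : ι → ℝ) (ρx : ι → Matrix n n ℂ)
    (R : Matrix n n ℂ) :
    ∑ x, p x * (prettyGoodMeasurement p ρx R x * ρx x).trace.re =
      ∑ x, p x ^ 2 * (R * ρx x * R * ρx x).trace.re := by
  refine Finset.sum_congr rfl fun x _ => ?_
  rw [prettyGoodMeasurement, Matrix.smul_mul, trace_smul, smul_eq_mul, Complex.re_ofReal_mul]
  ring

lemma re_trace_classicalQuantum_mul_self [DecidableEq ι] (p : ι → ℝ) (ρx : ι → Matrix n n ℂ)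
    (R : Matrix n n ℂ) :
    ((classicalQuantum fun x => (p x : ℂ) • (R * ρx x)) *
        classicalQuantum fun x => (p x : ℂ) • (R * ρx x)).trace.re =
      ∑ x, p x ^ 2 * (R * ρx x * R * ρx x).trace.re := by
  rw [classicalQuantum_mul_classicalQuantum, trace_classicalQuantum, Complex.re_sum]
  refine Finset.sum_congr rfl fun x _ => ?_
  simp only [Matrix.smul_mul, Matrix.mul_smul, trace_smul, smul_eq_mul, Complex.re_ofReal_mul,
    Matrix.mul_assoc]
  ring

lemma sum_sq_mul_re_trace_pos [Nonempty ι] [DecidableEq n] {p : ι → ℝ}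
    {ρx : ι → Matrix n n ℂ} {R : Matrix n n ℂ} (hp : ∀ x, 0 < p x)
    (hρx : ∀ x, (ρx x).IsHermitian) (hρx0 : ∀ x, ρx x ≠ 0) (hR : R.PosDef) :
    0 < ∑ x, p x ^ 2 * (R * ρx x * R * ρx x).trace.re :=
  Finset.sum_pos (fun x _ => mul_pos (pow_pos (hp x) 2)
    (RCLike.pos_iff.mp (hR.trace_mul_mul_mul_pos (hρx x) (hρx0 x))).1) Finset.univ_nonempty

end PrettyGoodMeasurement

theorem stmt0_general {nb d : ℕ}
    (p : (Fin nb → Bool) → ℝ) (ρx : (Fin nb → Bool) → Matrix (Fin d) (Fin d) ℂ)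
    (ρ : Matrix (Fin d) (Fin d) ℂ)
    (ρAB Q : Matrix ((Fin nb → Bool) × Fin d) ((Fin nb → Bool) × Fin d) ℂ)
    (hp : ∀ x, 0 < p x)
    (hρx : ∀ x, (ρx x).PosSemidef) (hρxt : ∀ x, (ρx x).trace = 1)
    (hρdef : ρ = ∑ x, (p x : ℂ) • ρx x) (hρ : ρ.PosDef)
    (hABdef : ρAB = ∑ x, (p x : ℂ) • (Matrix.single x x (1 : ℂ) ⊗ₖ ρx x))
    (R : Matrix (Fin d) (Fin d) ℂ) (hR : R = hρ.inv.posSemidef.sqrt)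
    (hQ : Q = ((1 : Matrix (Fin nb → Bool) (Fin nb → Bool) ℂ) ⊗ₖ R) * ρAB)
    (H₂ : ℝ) (hH₂ : H₂ = -Real.logb 2 (Q * Q).trace.re) :
    (∃ M : (Fin nb → Bool) → Matrix (Fin d) (Fin d) ℂ,
      (∀ x, (M x).PosSemidef) ∧ (∑ x, M x = 1) ∧
      (2 : ℝ) ^ (-H₂) ≤ ∑ x, p x * (M x * ρx x).trace.re) ∧
    ∑ x, p x * (((p x : ℂ) • (R * ρx x * R)) * ρx x).trace.re = (Q * Q).trace.re := by
  have hRpd : R.PosDef := hR ▸ hρ.posDef_sqrt_inv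
  have hAB : ρAB = classicalQuantum fun x => (p x : ℂ) • ρx x := by
    simp only [hABdef, classicalQuantum, kronecker_smul]
  have hQQ : (Q * Q).trace.re = ∑ x, p x ^ 2 * (R * ρx x * R * ρx x).trace.re := by
    rw [hQ, hAB, one_kronecker_mul_classicalQuantum, ← re_trace_classicalQuantum_mul_self]
    simp only [Matrix.mul_smul]
  have hguess : ∑ x, p x * (((p x : ℂ) • (R * ρx x * R)) * ρx x).trace.re = (Q * Q).trace.re :=
    (sum_mul_re_trace_prettyGoodMeasurement_mul p ρx R).trans hQQ.symm
  have hpos : 0 < (Q * Q).trace.re := hQQ ▸ sum_sq_mul_re_trace_pos hp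
    (fun x => (hρx x).isHermitian) (fun x h => by simpa [h] using hρxt x) hRpd
  refine ⟨⟨prettyGoodMeasurement p ρx R,
    posSemidef_prettyGoodMeasurement (fun x => (hp x).le) hρx hRpd.isHermitian,
    by rw [sum_prettyGoodMeasurement, ← hρdef, hR, hρ.sqrt_inv_mul_mul_sqrt_inv], ?_⟩, hguess⟩
  rw [hH₂, neg_neg, Real.rpow_logb two_pos (by norm_num) hpos]
  exact hguess.ge

/-- the maximal average guessing probability over all POVMs is at
least 2^{-H₂(ρ_AB|ρ)}, where H₂(ρ_AB|ρ) = -log₂ Tr(((I ⊗ ρ^{-1/2})ρ_AB)²);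
equivalently, the square-root measurement M_x = p_x ρ^{-1/2} ρ_x ρ^{-1/2}
satisfies Σ_x p_x Tr(M_x ρ_x) = Tr(((I ⊗ ρ^{-1/2})ρ_AB)²).
Here R = ρ^{-1/2} and Q = (I ⊗ ρ^{-1/2}) ρ_AB. -/
theorem stmt0 {nb d : ℕ}
    (p : (Fin nb → Bool) → ℝ) (ρx : (Fin nb → Bool) → Matrix (Fin d) (Fin d) ℂ)
    (ρ : Matrix (Fin d) (Fin d) ℂ)
    (ρAB Q : Matrix ((Fin nb → Bool) × Fin d) ((Fin nb → Bool) × Fin d) ℂ)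
    (hp : ∀ x, 0 < p x) (hps : ∑ x, p x = 1)
    (hρx : ∀ x, (ρx x).PosSemidef) (hρxt : ∀ x, (ρx x).trace = 1)
    (hρdef : ρ = ∑ x, (p x : ℂ) • ρx x) (hρ : ρ.PosDef)
    (hABdef : ρAB = ∑ x, (p x : ℂ) • (Matrix.single x x (1 : ℂ) ⊗ₖ ρx x))
    (R : Matrix (Fin d) (Fin d) ℂ) (hR : R = hρ.inv.posSemidef.sqrt)
    (hQ : Q = ((1 : Matrix (Fin nb → Bool) (Fin nb → Bool) ℂ) ⊗ₖ R) * ρAB)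
    (H₂ : ℝ) (hH₂ : H₂ = -Real.logb 2 (Q * Q).trace.re) :
    (∃ M : (Fin nb → Bool) → Matrix (Fin d) (Fin d) ℂ,
      (∀ x, (M x).PosSemidef) ∧ (∑ x, M x = 1) ∧
      (2 : ℝ) ^ (-H₂) ≤ ∑ x, p x * (M x * ρx x).trace.re) ∧
    ∑ x, p x * (((p x : ℂ) • (R * ρx x * R)) * ρx x).trace.re = (Q * Q).trace.re :=
  stmt0_general p ρx ρ ρAB Q hp hρx hρxt hρdef hρ hABdef R hR hQ H₂ hH₂
end

section
/- Let E_g = {q_y, σ_y}_{y ∈ {0,1}^{n-m}} be an ensemble of density matrices and σ = Σ_y q_y σ_y. If d(E_g) := δ(Σ_y q_y |y⟩⟨y| ⊗ σ_y, I/2^{n-m} ⊗ σ) ≤ ε, then 2^{-(n-m)} Σ_y δ(σ, σ_y) ≤ 2ε. -/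
open Matrix
open scoped Kronecker ComplexOrder

/-!
Put `σ = ∑ z, q z • σy z`, `r = 2^{-(n-m)}` and `D y = q y • σy y - r • σ`. The difference of the
two states is block diagonal with blocks `D y`; testing it against the block-diagonal unitary built
from the signs of the `D y` shows that its trace norm is at least `∑ y, ‖D y‖₁`. For each `y`,
`r • (σ - σy y) = (q y - r) • σy y - D y` and `|q y - r| = |tr (D y)| ≤ ‖D y‖₁`, so
`r * ‖σ - σy y‖₁ ≤ 2 * ‖D y‖₁`.
-/

namespace Matrix.IsHermitian

variable {n : Type*} [Fintype n] [DecidableEq n] {A B : Matrix n n ℂ}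

open Polynomial in
/-- The eigenvalues of `B` are sorted, so they agree with `f ∘ hA.eigenvalues` only up to a
permutation; the two are compared as roots of the characteristic polynomial. -/
theorem sum_comp_eigenvalues_of_eq_cfc (hA : A.IsHermitian) (hB : B.IsHermitian)
    {f : ℝ → ℝ} (hBA : B = cfc f A) (g : ℝ → ℝ) :
    ∑ i, g (hB.eigenvalues i) = ∑ i, g (f (hA.eigenvalues i)) := by
  have hroots : Finset.univ.val.map (RCLike.ofReal ∘ hB.eigenvalues)
      = Finset.univ.val.map (fun i => ((f (hA.eigenvalues i) : ℝ) : ℂ)) := by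
    rw [← hB.roots_charpoly_eq_eigenvalues, hBA, hA.charpoly_cfc_eq, Finset.prod_eq_multiset_prod,
      ← roots_multiset_prod_X_sub_C (Finset.univ.val.map fun i => (f (hA.eigenvalues i) : ℂ)),
      Multiset.map_map]
    rfl
  have := congrArg (fun s : Multiset ℂ => (s.map (fun z => g z.re)).sum) hroots
  simp only [Multiset.map_map, Function.comp_def, ← Finset.sum_eq_multiset_sum] at this
  simpa using this

theorem trace_cfc (hA : A.IsHermitian) (f : ℝ → ℝ) :
    (cfc f A).trace = ∑ i, (f (hA.eigenvalues i) : ℂ) := by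
  rw [hA.cfc_eq, IsHermitian.cfc, Unitary.conjStarAlgAut_apply, trace_mul_cycle,
    Unitary.coe_star_mul_self, one_mul, trace_diagonal]
  rfl

end Matrix.IsHermitian

section TraceNorm

variable {n : Type*} [Fintype n] [DecidableEq n] {A B S : Matrix n n ℂ}

theorem traceNorm_eq_sum_abs_eigenvalues (hA : A.IsHermitian) :
    traceNorm A = ∑ i, |hA.eigenvalues i| := by
  have hsq : Aᴴ * A = cfc (fun x : ℝ => x ^ 2) A := by
    rw [cfc_pow_id A 2 hA.isSelfAdjoint, hA.eq, sq]
  rw [traceNorm, IsHermitian.sum_comp_eigenvalues_of_eq_cfc hA _ hsq]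
  simp only [Real.sqrt_sq_eq_abs]

theorem traceNorm_real_smul (hA : A.IsHermitian) (c : ℝ) :
    traceNorm ((c : ℂ) • A) = |c| * traceNorm A := by
  have hcA : ((c : ℂ) • A).IsHermitian := hA.smul (Complex.conj_ofReal c)
  have hcfc : (c : ℂ) • A = cfc (fun x : ℝ => c * x) A := by
    rw [cfc_const_mul_id c A hA.isSelfAdjoint]; rfl
  rw [traceNorm_eq_sum_abs_eigenvalues hcA, traceNorm_eq_sum_abs_eigenvalues hA,
    IsHermitian.sum_comp_eigenvalues_of_eq_cfc hA hcA hcfc, Finset.mul_sum]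
  simp only [abs_mul]

theorem traceNorm_of_posSemidef (hA : A.PosSemidef) : traceNorm A = A.trace.re := by
  rw [traceNorm_eq_sum_abs_eigenvalues hA.isHermitian, hA.isHermitian.trace_eq_sum_eigenvalues]
  simp [abs_of_nonneg (hA.eigenvalues_nonneg _)]

theorem abs_re_trace_mul_le_traceNorm (hA : A.IsHermitian) (hS : S ∈ unitaryGroup n ℂ) :
    |(S * A).trace.re| ≤ traceNorm A := by
  set U : Matrix n n ℂ := (hA.eigenvectorUnitary : Matrix n n ℂ) with hU
  have hV : star U * S * U ∈ unitaryGroup n ℂ :=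
    mul_mem (mul_mem (Unitary.star_mem hA.eigenvectorUnitary.2) hS) hA.eigenvectorUnitary.2
  have htrace : (S * A).trace = ∑ i, (star U * S * U) i i * hA.eigenvalues i := by
    conv_lhs => rw [hA.spectral_theorem, Unitary.conjStarAlgAut_apply, ← hU]
    rw [← mul_assoc, ← mul_assoc, trace_mul_cycle, ← mul_assoc]
    simp only [trace, diag, mul_diagonal, Function.comp_apply]
    rfl
  rw [htrace, traceNorm_eq_sum_abs_eigenvalues hA, Complex.re_sum]
  refine (Finset.abs_sum_le_sum_abs _ _).trans (Finset.sum_le_sum fun i _ => ?_)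
  rw [Complex.re_mul_ofReal, abs_mul]
  exact mul_le_of_le_one_left (abs_nonneg _)
    ((Complex.abs_re_le_norm _).trans (entry_norm_bound_of_unitary hV i i))

theorem exists_mem_unitaryGroup_re_trace_mul_eq_traceNorm (hA : A.IsHermitian) :
    ∃ S ∈ unitaryGroup n ℂ, (S * A).trace.re = traceNorm A := by
  set sign : ℝ → ℝ := fun x => if x < 0 then -1 else 1
  have hsign_sq : (fun x => sign x * sign x) = fun _ => 1 := by
    funext x; by_cases hx : x < 0 <;> simp [sign, hx]
  have hsign_mul : (fun x => sign x * x) = fun x => |x| := by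
    funext x; by_cases hx : x < 0 <;> simp [sign, hx, abs_of_neg, abs_of_nonneg, not_lt.mp]
  have hfinite : (spectrum ℝ A).Finite :=
    hA.spectrum_real_eq_range_eigenvalues ▸ Set.finite_range _
  have hcont : ContinuousOn sign (spectrum ℝ A) := hfinite.continuousOn sign
  refine ⟨cfc sign A, ?_, ?_⟩
  · rw [mem_unitaryGroup_iff, (cfc_predicate sign A).star_eq, ← cfc_mul sign sign A, hsign_sq,
      cfc_const_one ℝ A]
  · have hmul := cfc_mul sign (fun x => x) A
    rw [cfc_id' ℝ A hA.isSelfAdjoint, hsign_mul] at hmul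
    rw [← hmul, hA.trace_cfc, traceNorm_eq_sum_abs_eigenvalues hA]
    simp

theorem abs_re_trace_le_traceNorm (hA : A.IsHermitian) : |A.trace.re| ≤ traceNorm A := by
  simpa using abs_re_trace_mul_le_traceNorm hA (one_mem _)

theorem traceNorm_sub_le (hA : A.IsHermitian) (hB : B.IsHermitian) :
    traceNorm (A - B) ≤ traceNorm A + traceNorm B := by
  obtain ⟨S, hS, hSAB⟩ := exists_mem_unitaryGroup_re_trace_mul_eq_traceNorm (hA.sub hB)
  rw [← hSAB, mul_sub, trace_sub, Complex.sub_re]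
  have := abs_re_trace_mul_le_traceNorm hA hS
  have := abs_re_trace_mul_le_traceNorm hB hS
  linarith [neg_abs_le (S * B).trace.re, le_abs_self (S * A).trace.re]

end TraceNorm

namespace Matrix

theorem sum_kronecker {ι k m R : Type*} [NonUnitalNonAssocSemiring R] (s : Finset ι)
    (A : ι → Matrix k k R) (B : Matrix m m R) : (∑ i ∈ s, A i) ⊗ₖ B = ∑ i ∈ s, A i ⊗ₖ B := by
  ext; simp [kroneckerMap_apply, Matrix.sum_apply, Finset.sum_mul]

section KroneckerBlockDiagonal

variable {k m R : Type*} [Fintype k] [DecidableEq k]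

def kroneckerBlockDiagonal [Semiring R] (A : k → Matrix m m R) : Matrix (k × m) (k × m) R :=
  ∑ y, single y y 1 ⊗ₖ A y

theorem kroneckerBlockDiagonal_mul [CommSemiring R] [Fintype m] (A B : k → Matrix m m R) :
    kroneckerBlockDiagonal A * kroneckerBlockDiagonal B =
      kroneckerBlockDiagonal fun y => A y * B y := by
  simp only [kroneckerBlockDiagonal, Finset.sum_mul, Finset.mul_sum, ← mul_kronecker_mul]
  refine Finset.sum_congr rfl fun y _ => ?_
  rw [Finset.sum_eq_single y
    (fun z _ hzy => by rw [single_mul_single_of_ne (h := hzy), zero_kronecker]) (by simp),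
    single_mul_single_same, one_mul]

theorem kroneckerBlockDiagonal_one [Semiring R] [DecidableEq m] :
    kroneckerBlockDiagonal (fun _ : k => (1 : Matrix m m R)) = 1 := by
  rw [kroneckerBlockDiagonal, ← sum_kronecker, sum_single_one, one_kronecker_one]

theorem trace_kroneckerBlockDiagonal [Semiring R] [Fintype m] (A : k → Matrix m m R) :
    (kroneckerBlockDiagonal A).trace = ∑ y, (A y).trace := by
  simp [kroneckerBlockDiagonal, trace_sum, trace_kronecker]

theorem conjTranspose_kroneckerBlockDiagonal [CommSemiring R] [StarRing R] (A : k → Matrix m m R) :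
    (kroneckerBlockDiagonal A)ᴴ = kroneckerBlockDiagonal fun y => (A y)ᴴ := by
  simp [kroneckerBlockDiagonal, conjTranspose_sum, conjTranspose_kronecker]

theorem isHermitian_kroneckerBlockDiagonal [CommSemiring R] [StarRing R] {A : k → Matrix m m R}
    (hA : ∀ y, (A y).IsHermitian) : (kroneckerBlockDiagonal A).IsHermitian := by
  rw [IsHermitian, conjTranspose_kroneckerBlockDiagonal]
  exact congrArg _ (funext hA)

theorem kroneckerBlockDiagonal_mem_unitaryGroup [CommRing R] [StarRing R] [Fintype m]
    [DecidableEq m] {A : k → Matrix m m R} (hA : ∀ y, A y ∈ unitaryGroup m R) :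
    kroneckerBlockDiagonal A ∈ unitaryGroup (k × m) R := by
  rw [mem_unitaryGroup_iff, star_eq_conjTranspose, conjTranspose_kroneckerBlockDiagonal,
    kroneckerBlockDiagonal_mul]
  simp_rw [← star_eq_conjTranspose, mem_unitaryGroup_iff.mp (hA _)]
  exact kroneckerBlockDiagonal_one

theorem sum_smul_single_kronecker_sub_smul_one_kronecker [CommRing R] (q : k → R) (c : R)
    (A : k → Matrix m m R) (B : Matrix m m R) :
    ∑ y, q y • (single y y 1 ⊗ₖ A y) - c • ((1 : Matrix k k R) ⊗ₖ B) =
      kroneckerBlockDiagonal fun y => q y • A y - c • B := by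
  simp only [kroneckerBlockDiagonal, ← sum_single_one, sum_kronecker, Finset.smul_sum,
    ← Finset.sum_sub_distrib]
  refine Finset.sum_congr rfl fun y _ => ?_
  ext
  simp [kroneckerMap_apply, mul_sub, mul_left_comm]

end KroneckerBlockDiagonal

end Matrix

theorem sum_traceNorm_le_traceNorm_kroneckerBlockDiagonal {k m : Type*} [Fintype k]
    [DecidableEq k] [Fintype m] [DecidableEq m] {D : k → Matrix m m ℂ}
    (hD : ∀ y, (D y).IsHermitian) :
    ∑ y, traceNorm (D y) ≤ traceNorm (kroneckerBlockDiagonal D) := by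
  choose S hS hSD using fun y => exists_mem_unitaryGroup_re_trace_mul_eq_traceNorm (hD y)
  calc ∑ y, traceNorm (D y)
      = (kroneckerBlockDiagonal S * kroneckerBlockDiagonal D).trace.re := by
        rw [kroneckerBlockDiagonal_mul, trace_kroneckerBlockDiagonal, Complex.re_sum]
        exact Finset.sum_congr rfl fun y _ => (hSD y).symm
    _ ≤ traceNorm (kroneckerBlockDiagonal D) :=
        (le_abs_self _).trans <| abs_re_trace_mul_le_traceNorm
          (isHermitian_kroneckerBlockDiagonal hD) (kroneckerBlockDiagonal_mem_unitaryGroup hS)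

theorem mul_traceNorm_sub_le_two_mul_traceNorm {n : Type*} [Fintype n] [DecidableEq n]
    {ρ σ : Matrix n n ℂ} (hρ : ρ.PosSemidef) (hρt : ρ.trace = 1) (hσ : σ.IsHermitian)
    (hσt : σ.trace = 1) (q : ℝ) {r : ℝ} (hr : 0 ≤ r) :
    r * traceNorm (σ - ρ) ≤ 2 * traceNorm ((q : ℂ) • ρ - (r : ℂ) • σ) := by
  set D := (q : ℂ) • ρ - (r : ℂ) • σ
  have hD : D.IsHermitian :=
    (hρ.isHermitian.smul (Complex.conj_ofReal q)).sub (hσ.smul (Complex.conj_ofReal r))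
  have hDt : |q - r| ≤ traceNorm D := by
    have htrace : D.trace = ((q - r : ℝ) : ℂ) := by
      simp [D, trace_sub, trace_smul, hρt, hσt]
    simpa [htrace] using abs_re_trace_le_traceNorm hD
  have hsplit : (r : ℂ) • (σ - ρ) = ((q - r : ℝ) : ℂ) • ρ - D := by
    simp only [D]; push_cast; module
  calc r * traceNorm (σ - ρ) = traceNorm ((r : ℂ) • (σ - ρ)) := by
        rw [traceNorm_real_smul (hσ.sub hρ.isHermitian), abs_of_nonneg hr]
    _ ≤ traceNorm (((q - r : ℝ) : ℂ) • ρ) + traceNorm D := by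
        rw [hsplit]; exact traceNorm_sub_le (hρ.isHermitian.smul (Complex.conj_ofReal _)) hD
    _ = |q - r| + traceNorm D := by
        rw [traceNorm_real_smul hρ.isHermitian, traceNorm_of_posSemidef hρ, hρt, Complex.one_re,
          mul_one]
    _ ≤ 2 * traceNorm D := by linarith

theorem stmt5_general {n m d : ℕ}
    (q : (Fin (n - m) → Bool) → ℝ)
    (σy : (Fin (n - m) → Bool) → Matrix (Fin d) (Fin d) ℂ) (ε : ℝ)
    (hq1 : ∑ y, q y = 1)
    (hσ : ∀ y, (σy y).PosSemidef) (hσt : ∀ y, (σy y).trace = 1)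
    (h : traceDist
        (∑ y, (q y : ℂ) • (Matrix.single y y (1 : ℂ) ⊗ₖ σy y))
        (((2 : ℂ) ^ (n - m))⁻¹ •
          ((1 : Matrix (Fin (n - m) → Bool) (Fin (n - m) → Bool) ℂ)
            ⊗ₖ ∑ y, (q y : ℂ) • σy y)) ≤ ε) :
    ((2 : ℝ) ^ (n - m))⁻¹ * ∑ y, traceDist (∑ z, (q z : ℂ) • σy z) (σy y) ≤ 2 * ε := by
  set r : ℝ := ((2 : ℝ) ^ (n - m))⁻¹
  set σ := ∑ z, (q z : ℂ) • σy z
  have hσh : σ.IsHermitian :=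
    isSelfAdjoint_sum _ fun z _ => (hσ z).isHermitian.smul (Complex.conj_ofReal (q z))
  have hσ1 : σ.trace = 1 := by
    simp [σ, trace_sum, trace_smul, hσt, ← Complex.ofReal_sum, hq1]
  have hblock : ∑ y, traceNorm ((q y : ℂ) • σy y - (r : ℂ) • σ) ≤ 2 * ε := by
    have hr : ((2 : ℂ) ^ (n - m))⁻¹ = (r : ℂ) := by simp [r]
    rw [traceDist, hr, sum_smul_single_kronecker_sub_smul_one_kronecker] at h
    linarith [sum_traceNorm_le_traceNorm_kroneckerBlockDiagonal fun y =>
      ((hσ y).isHermitian.smul (Complex.conj_ofReal (q y))).sub (hσh.smul (Complex.conj_ofReal r))]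
  rw [Finset.mul_sum]
  refine (Finset.sum_le_sum fun y _ => ?_).trans hblock
  have := mul_traceNorm_sub_le_two_mul_traceNorm (hσ y) (hσt y) hσh hσ1 (q y)
    (by positivity : 0 ≤ r)
  rw [traceDist]
  linarith

/-- if the cq-state Σ_y q_y |y⟩⟨y| ⊗ σ_y is ε-close in trace
distance to (I/2^{n-m}) ⊗ σ, then 2^{-(n-m)} Σ_y δ(σ, σ_y) ≤ 2ε. -/
theorem stmt5 {n m d : ℕ}
    (q : (Fin (n - m) → Bool) → ℝ)
    (σy : (Fin (n - m) → Bool) → Matrix (Fin d) (Fin d) ℂ) (ε : ℝ)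
    (hq0 : ∀ y, 0 ≤ q y) (hq1 : ∑ y, q y = 1)
    (hσ : ∀ y, (σy y).PosSemidef) (hσt : ∀ y, (σy y).trace = 1)
    (h : traceDist
        (∑ y, (q y : ℂ) • (Matrix.single y y (1 : ℂ) ⊗ₖ σy y))
        (((2 : ℂ) ^ (n - m))⁻¹ •
          ((1 : Matrix (Fin (n - m) → Bool) (Fin (n - m) → Bool) ℂ)
            ⊗ₖ ∑ y, (q y : ℂ) • σy y)) ≤ ε) :
    ((2 : ℝ) ^ (n - m))⁻¹ * ∑ y, traceDist (∑ z, (q z : ℂ) • σy z) (σy y) ≤ 2 * ε :=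
  stmt5_general q σy ε hq1 hσ hσt h
end
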